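/- Let A be an n-by-n upper triangular matrix with zero diagonal except for the (n,n) entry equal to a, superdiagonal entries a_1, ..., a_{n−1} all nonzero, and all other entries zero; let B be the (n−1)-by-(n−1) matrix with superdiagonal entries a_1, ..., a_{n−2} and all other entries zero. Then w(A) > w(B). -/

import Mathlib

open scoped Kronecker InnerProductSpace

/-- The operator norm (spectral norm) of a complex matrix, viewed as an operator
on Euclidean space. -/
noncomputable def opNorm {n : Type*} [Fintype n] [DecidableEq n] (A : Matrix n n ℂ) : ℝ :=
  ‖Matrix.toEuclideanCLM (𝕜 := ℂ) A‖

/-- The numerical radius of a complex matrix: the supremum of `|⟨Ax, x⟩|` over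
unit vectors `x`. -/
noncomputable def numRadius {n : Type*} [Fintype n] [DecidableEq n] (A : Matrix n n ℂ) : ℝ :=
  sSup {r : ℝ | ∃ x : EuclideanSpace ℂ n, ‖x‖ = 1 ∧
    r = ‖⟪x, Matrix.toEuclideanLin A x⟫_ℂ‖}

/-! A maximiser `x` of `|⟪x, T x⟫|` on the unit sphere can be improved by perturbing it to
`x + t e` whenever `e ⊥ x`, `⟪e, T x⟫ = 0` and `⟪x, T e⟫ ≠ 0`: the first-order gain
`t ⟪x, T e⟫`, with the phase of `t` aligned to `⟪x, T x⟫`, beats the normalisation `1 + |t|²`.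
Inside `B`, at the coordinate following the last nonzero entry of a maximiser `x`, this shows
that `x` has nonzero last entry. In `A`, at the new last coordinate with `x` extended by zero,
it then gives `w(A) > |⟪x, B x⟫| = w(B)`. -/

open scoped ComplexConjugate
open Matrix WithLp Metric

theorem exists_norm_inner_self_mul_sq_lt {E : Type*} [NormedAddCommGroup E]
    [InnerProductSpace ℂ E] (T : E →ₗ[ℂ] E) {x e : E} (hx : ‖x‖ = 1) (he : ‖e‖ = 1)
    (hxe : ⟪x, e⟫_ℂ = 0) (heT : ⟪e, T x⟫_ℂ = 0) (hxT : ⟪x, T e⟫_ℂ ≠ 0) :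
    ∃ v : E, ‖⟪x, T x⟫_ℂ‖ * ‖v‖ ^ 2 < ‖⟪v, T v⟫_ℂ‖ := by
  set m := ⟪x, T x⟫_ℂ
  set c := ⟪x, T e⟫_ℂ
  set d := ⟪e, T e⟫_ℂ
  set σ := Complex.exp (m.arg * Complex.I)
  have hσ : ‖σ‖ = 1 := Complex.norm_exp_ofReal_mul_I _
  have hm : m = σ * ‖m‖ := by rw [mul_comm]; exact (Complex.norm_mul_exp_arg_mul_I m).symm
  have hc : 0 < ‖c‖ := norm_pos_iff.mpr hxT
  set ε := ‖c‖ / (‖c‖ + ‖d‖ + ‖m‖)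
  have hε : 0 < ε := by positivity
  have hεc : ε * (‖d‖ + ‖m‖) < ‖c‖ := by
    rw [div_mul_eq_mul_div, div_lt_iff₀ (by positivity)]
    nlinarith
  set t : ℂ := ε * σ * ‖c‖ / c
  have ht : ‖t‖ = ε := by simp [t, hσ, abs_of_pos hε, hc.ne']
  have htc : t * c = σ * (ε * ‖c‖) := by simp only [t]; field_simp
  refine ⟨x + t • e, ?_⟩
  have hnorm : ‖x + t • e‖ ^ 2 = 1 + ε ^ 2 := by
    rw [norm_add_sq (𝕜 := ℂ), inner_smul_right, hxe, norm_smul, ht, he, hx]; simp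
  have hinner : ⟪x + t • e, T (x + t • e)⟫_ℂ = σ * (‖m‖ + ε * ‖c‖ : ℝ) + (conj t * t) * d := by
    simp only [map_add, map_smul, inner_add_left, inner_add_right, inner_smul_left,
      inner_smul_right, heT]
    push_cast
    linear_combination hm + htc
  have hquad : ‖(conj t * t) * d‖ = ε ^ 2 * ‖d‖ := by simp [ht, sq]
  calc ‖m‖ * ‖x + t • e‖ ^ 2 < ‖m‖ + ε * ‖c‖ - ε ^ 2 * ‖d‖ := by rw [hnorm]; nlinarith
    _ = ‖σ * (‖m‖ + ε * ‖c‖ : ℝ)‖ - ‖(conj t * t) * d‖ := by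
      rw [hquad, norm_mul, hσ, one_mul, Complex.norm_real, Real.norm_of_nonneg (by positivity)]
    _ ≤ ‖⟪x + t • e, T (x + t • e)⟫_ℂ‖ := by
      rw [hinner]; simpa using norm_sub_norm_le (σ * (‖m‖ + ε * ‖c‖ : ℝ)) (-((conj t * t) * d))

section NumRadius

variable {ι : Type*} [Fintype ι] [DecidableEq ι]

theorem numRadius_eq_sSup_image_sphere (A : Matrix ι ι ℂ) :
    numRadius A = sSup ((fun x => ‖⟪x, toEuclideanLin A x⟫_ℂ‖) '' sphere 0 1) := by
  unfold numRadius
  congr 1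
  ext r
  simp [eq_comm]

theorem isCompact_image_sphere (A : Matrix ι ι ℂ) :
    IsCompact ((fun x => ‖⟪x, toEuclideanLin A x⟫_ℂ‖) '' sphere (0 : EuclideanSpace ℂ ι) 1) :=
  (isCompact_sphere 0 1).image <| by fun_prop

theorem norm_inner_le_numRadius (A : Matrix ι ι ℂ) {x : EuclideanSpace ℂ ι} (hx : ‖x‖ = 1) :
    ‖⟪x, toEuclideanLin A x⟫_ℂ‖ ≤ numRadius A := by
  rw [numRadius_eq_sSup_image_sphere]
  exact le_csSup (isCompact_image_sphere A).bddAbove ⟨x, by simpa using hx, rfl⟩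

theorem norm_inner_le_numRadius_mul (A : Matrix ι ι ℂ) (x : EuclideanSpace ℂ ι) :
    ‖⟪x, toEuclideanLin A x⟫_ℂ‖ ≤ numRadius A * ‖x‖ ^ 2 := by
  rcases eq_or_ne x 0 with rfl | hx
  · simp
  have hx' : 0 < ‖x‖ := norm_pos_iff.mpr hx
  have h := norm_inner_le_numRadius A (x := ((‖x‖⁻¹ : ℝ) : ℂ) • x) (by simp [norm_smul, hx'.ne'])
  rw [map_smul, inner_smul_left, inner_smul_right, norm_mul, norm_mul] at h
  simp only [Complex.norm_conj, Complex.norm_real, norm_inv, norm_norm] at h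
  rwa [← mul_assoc, ← mul_inv, ← sq, inv_mul_le_iff₀ (by positivity), mul_comm] at h

theorem exists_norm_inner_eq_numRadius [Nonempty ι] (A : Matrix ι ι ℂ) :
    ∃ x : EuclideanSpace ℂ ι, ‖x‖ = 1 ∧ ‖⟪x, toEuclideanLin A x⟫_ℂ‖ = numRadius A := by
  have hne : (sphere (0 : EuclideanSpace ℂ ι) 1).Nonempty :=
    NormedSpace.sphere_nonempty.mpr zero_le_one
  obtain ⟨x, hx, hmax⟩ := (isCompact_image_sphere A).sSup_mem (hne.image _)
  exact ⟨x, by simpa using hx, hmax.trans (numRadius_eq_sSup_image_sphere A).symm⟩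

theorem inner_toEuclideanLin_single (A : Matrix ι ι ℂ) (x : EuclideanSpace ℂ ι) (k : ι) :
    ⟪x, toEuclideanLin A (EuclideanSpace.single k 1)⟫_ℂ = ∑ i, conj (x i) * A i k := by
  simp [EuclideanSpace.inner_eq_star_dotProduct, toLpLin_apply, dotProduct, mul_comm]

theorem norm_inner_lt_numRadius (A : Matrix ι ι ℂ) {x : EuclideanSpace ℂ ι} (hx : ‖x‖ = 1)
    (k : ι) (hxk : x k = 0) (hAxk : toEuclideanLin A x k = 0)
    (hcol : ∑ i, conj (x i) * A i k ≠ 0) :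
    ‖⟪x, toEuclideanLin A x⟫_ℂ‖ < numRadius A := by
  obtain ⟨v, hv⟩ := exists_norm_inner_self_mul_sq_lt (toEuclideanLin A)
    (e := EuclideanSpace.single k 1) hx (by simp)
    (by simp [EuclideanSpace.inner_single_right, hxk])
    (by simp [EuclideanSpace.inner_single_left, hAxk])
    (by rwa [inner_toEuclideanLin_single])
  have hv0 : 0 < ‖v‖ ^ 2 := by
    rcases eq_or_ne v 0 with rfl | hv0
    · simp at hv
    · positivity
  exact lt_of_mul_lt_mul_right (hv.trans_le (norm_inner_le_numRadius_mul A v)) hv0.le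

end NumRadius

theorem numRadius_submatrix_castSucc_lt {N : ℕ} (A : Matrix (Fin (N + 1)) (Fin (N + 1)) ℂ)
    (hrow : ∀ j : Fin N, A (Fin.last N) j.castSucc = 0) {x : EuclideanSpace ℂ (Fin N)}
    (hx : ‖x‖ = 1)
    (hmax : ‖⟪x, toEuclideanLin (A.submatrix Fin.castSucc Fin.castSucc) x⟫_ℂ‖ =
      numRadius (A.submatrix Fin.castSucc Fin.castSucc))
    (hcol : ∑ i, conj (x i) * A i.castSucc (Fin.last N) ≠ 0) :
    numRadius (A.submatrix Fin.castSucc Fin.castSucc) < numRadius A := by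
  set y : EuclideanSpace ℂ (Fin (N + 1)) := toLp 2 (Fin.snoc (α := fun _ => ℂ) (ofLp x) 0)
  have hy : ‖y‖ = 1 := by
    rw [← hx, EuclideanSpace.norm_eq, EuclideanSpace.norm_eq, Fin.sum_univ_castSucc]
    simp [y]
  have hinner : ⟪y, toEuclideanLin A y⟫_ℂ =
      ⟪x, toEuclideanLin (A.submatrix Fin.castSucc Fin.castSucc) x⟫_ℂ := by
    simp [y, EuclideanSpace.inner_eq_star_dotProduct, toLpLin_apply, dotProduct, mulVec,
      Fin.sum_univ_castSucc]
  rw [← hmax, ← hinner]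
  refine norm_inner_lt_numRadius A hy (Fin.last N) (by simp [y]) ?_ ?_
  · simp [y, toLpLin_apply, mulVec, dotProduct, Fin.sum_univ_castSucc, hrow]
  · simpa [y, Fin.sum_univ_castSucc] using hcol

def weightedShift (N : ℕ) (w : ℕ → ℂ) : Matrix (Fin N) (Fin N) ℂ :=
  fun i j => if (i : ℕ) + 1 = (j : ℕ) then w i else 0

theorem last_ne_zero_of_norm_inner_weightedShift_eq_numRadius {M : ℕ} {w : ℕ → ℂ}
    (hw : ∀ i < M, w i ≠ 0) {x : EuclideanSpace ℂ (Fin (M + 1))} (hx : ‖x‖ = 1)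
    (hmax : ‖⟪x, toEuclideanLin (weightedShift (M + 1) w) x⟫_ℂ‖ =
      numRadius (weightedShift (M + 1) w)) :
    x (Fin.last M) ≠ 0 := by
  intro hlast
  have hsupp : (Finset.univ.filter fun i => x i ≠ 0).Nonempty := by
    obtain ⟨i, hi⟩ : ∃ i, x i ≠ 0 := by
      by_contra! h
      simp [show x = 0 from PiLp.ext h] at hx
    exact ⟨i, by simpa using hi⟩
  set j := (Finset.univ.filter fun i => x i ≠ 0).max' hsupp
  have hj : x j ≠ 0 := (Finset.mem_filter.mp (Finset.max'_mem _ hsupp)).2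
  have hzero : ∀ i, j < i → x i = 0 := fun i hji => by
    by_contra h
    exact (Finset.le_max' _ i (by simpa using h)).not_gt hji
  have hjM : (j : ℕ) < M := Fin.val_lt_last fun h => hj (h ▸ hlast)
  set k : Fin (M + 1) := ⟨j + 1, by omega⟩
  refine (norm_inner_lt_numRadius _ hx k (hzero k (Fin.lt_def.mpr (by simp [k]))) ?_ ?_).ne hmax
  · simp only [toLpLin_apply, mulVec, dotProduct, weightedShift]
    refine Finset.sum_eq_zero fun i _ => ?_
    split_ifs with hki
    · rw [hzero i (Fin.lt_def.mpr (by simp only [k] at hki; omega)), mul_zero]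
    · rw [zero_mul]
  · rw [Finset.sum_eq_single j]
    · simpa [weightedShift, k, hj] using hw j hjM
    · intro i _ hij
      simp [weightedShift, k, Fin.val_ne_of_ne hij]
    · simp

theorem stmt12 (n : ℕ) (hn : 2 ≤ n) (a : ℂ) (w : ℕ → ℂ)
    (hw : ∀ i : ℕ, i < n - 1 → w i ≠ 0)
    (A : Matrix (Fin n) (Fin n) ℂ)
    (hA : A = fun (i j : Fin n) => if (i : ℕ) + 1 = (j : ℕ) then w (i : ℕ)
      else if (i : ℕ) = n - 1 ∧ (j : ℕ) = n - 1 then a else 0)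
    (B : Matrix (Fin (n - 1)) (Fin (n - 1)) ℂ)
    (hB : B = fun (i j : Fin (n - 1)) => if (i : ℕ) + 1 = (j : ℕ) then w (i : ℕ) else 0) :
    numRadius B < numRadius A := by
  obtain ⟨M, rfl⟩ : ∃ M, n = M + 2 := ⟨n - 2, by omega⟩
  change B = weightedShift (M + 1) w at hB
  subst hB
  obtain ⟨x, hx, hmax⟩ := exists_norm_inner_eq_numRadius (weightedShift (M + 1) w)
  have hlast := last_ne_zero_of_norm_inner_weightedShift_eq_numRadius
    (fun i hi => hw i (by omega)) hx hmax
  have hAB : A.submatrix Fin.castSucc Fin.castSucc = weightedShift (M + 1) w := by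
    ext i j
    rw [submatrix_apply, hA]
    simp [weightedShift, i.isLt.ne]
  rw [← hAB] at hmax ⊢
  refine numRadius_submatrix_castSucc_lt A (fun j => ?_) hx hmax ?_
  · simp only [hA, Nat.add_one_sub_one, Fin.val_last, Fin.val_castSucc, j.isLt.ne, and_false, ↓reduceIte, ite_eq_right_iff]
    omega
  · rw [Finset.sum_eq_single (Fin.last M)]
    · simpa [hA, hlast] using hw M (by omega)
    · intro i _ hi
      simp [hA, i.isLt.ne, (by simpa using Fin.val_ne_of_ne hi : (i : ℕ) ≠ M)]
    · simp
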